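/- If Ω1 and Ω2 are properly convex open domains in RP^n that are dual to each other, then Ω1 is strictly convex with C^1 boundary if and only if Ω2 is strictly convex with C^1 boundary. -/

import Mathlib

open Set

variable {n : ℕ}

/-- The dual cone of a properly convex open cone `C ⊆ ℝ^{n+1}`. -/
def dualConeSet (C : Set (EuclideanSpace ℝ (Fin (n + 1)))) :
    Set (EuclideanSpace ℝ (Fin (n + 1)) →L[ℝ] ℝ) :=
  {φ | ∀ v ∈ closure C, v ≠ 0 → 0 < φ v}

/-- The projective domain associated to the cone `C` is strictly convex: the boundary contains
no nondegenerate segment, i.e. the open segment between two non-proportional nonzero boundary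
vectors of the cone lies inside the open cone. -/
def IsStrictlyConvexCone {W : Type*} [AddCommGroup W] [Module ℝ W] [TopologicalSpace W]
    (C : Set W) : Prop :=
  ∀ x ∈ frontier C, ∀ y ∈ frontier C, x ≠ 0 → y ≠ 0 → (∀ t : ℝ, y ≠ t • x) →
    openSegment ℝ x y ⊆ C

/-- The boundary of the projective domain associated to the cone `C` is `C¹`: at every nonzero
boundary vector the supporting hyperplane is unique, i.e. any two functionals positive on `C`
and vanishing at the boundary point are proportional. -/
def HasC1BoundaryCone (C : Set (EuclideanSpace ℝ (Fin (n + 1)))) : Prop :=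
  ∀ x ∈ frontier C, x ≠ 0 →
    ∀ φ ψ : EuclideanSpace ℝ (Fin (n + 1)) →L[ℝ] ℝ,
      (φ x = 0 ∧ ∀ w ∈ C, 0 < φ w) → (ψ x = 0 ∧ ∀ w ∈ C, 0 < ψ w) →
      ∃ c : ℝ, 0 < c ∧ ψ = c • φ

/-- The boundary of the dual projective domain (associated to a cone `D` of functionals) is
`C¹`: at every nonzero boundary functional the supporting hyperplane — given by evaluation
at a vector of `ℝ^{n+1}` under the double-dual identification — is unique up to positive
scalar. -/
def HasC1BoundaryDualCone (D : Set (EuclideanSpace ℝ (Fin (n + 1)) →L[ℝ] ℝ)) : Prop :=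
  ∀ φ ∈ frontier D, φ ≠ 0 →
    ∀ v w : EuclideanSpace ℝ (Fin (n + 1)),
      (φ v = 0 ∧ ∀ ψ ∈ D, 0 < ψ v) → (φ w = 0 ∧ ∀ ψ ∈ D, 0 < ψ w) →
      ∃ c : ℝ, 0 < c ∧ w = c • v

/-!
Under the pairing `⟨φ, v⟩ = φ v`, a nonzero functional on the frontier of the dual cone `C*` is a
supporting hyperplane of `C` at each nonzero boundary vector it kills, and conversely every
supporting hyperplane of `C` lies on the frontier of `C*`; by the bipolar theorem, a vector
positive on `C*` lies in `closure C`. A segment in `∂C*` is therefore a pencil of distinct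
supporting hyperplanes at one boundary vector of `C` (a non-`C¹` point), and a segment in `∂C`
lies in the kernel of the supporting hyperplane at its midpoint, a point of `∂C*` which is then
supported by the two non-proportional endpoints of the segment. Properness of `C`
provides a functional positive on `closure C \ {0}`, so `C*` is nonempty and its closure is the
set of functionals nonnegative on `C`.
-/

section Cone

variable {E : Type*} [AddCommGroup E] [Module ℝ E] [TopologicalSpace E] {K : Set E}

lemma smul_mem_closure_of_cone [ContinuousConstSMul ℝ E]
    (hK : ∀ v ∈ K, ∀ t : ℝ, 0 < t → t • v ∈ K) {t : ℝ} (ht : 0 < t) {v : E}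
    (hv : v ∈ closure K) : t • v ∈ closure K :=
  map_mem_closure (continuous_const_smul t) hv fun w hw => hK w hw t ht

lemma zero_mem_closure_of_cone [ContinuousSMul ℝ E]
    (hK : ∀ v ∈ K, ∀ t : ℝ, 0 < t → t • v ∈ K) (hne : K.Nonempty) : (0 : E) ∈ closure K := by
  obtain ⟨v, hv⟩ := hne
  have hlim : Filter.Tendsto (fun t : ℝ => t • v) (nhdsWithin 0 (Ioi 0)) (nhds 0) := by
    simpa using ((Filter.tendsto_id (x := nhds (0 : ℝ))).mono_left nhdsWithin_le_nhds).smul_const v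
  exact mem_closure_of_tendsto hlim (eventually_nhdsWithin_of_forall fun t ht => hK v hv t ht)

lemma nonpos_of_forall_lt_of_cone (hK : ∀ v ∈ K, ∀ t : ℝ, 0 < t → t • v ∈ K)
    {f : E →L[ℝ] ℝ} {u : ℝ} (hf : ∀ a ∈ K, f a < u) {a : E} (ha : a ∈ K) : f a ≤ 0 := by
  by_contra! hpos
  have := hf _ (hK a ha ((max u 0 + 1) / f a) (by positivity))
  rw [map_smul, smul_eq_mul, div_mul_cancel₀ _ hpos.ne'] at this
  linarith [le_max_left u 0]

lemma pos_of_nonneg_of_isOpen [IsTopologicalAddGroup E] [ContinuousSMul ℝ E] (hK : IsOpen K)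
    {φ : E →L[ℝ] ℝ} (hφ0 : φ ≠ 0) (hφ : ∀ w ∈ K, 0 ≤ φ w) {w : E} (hw : w ∈ K) : 0 < φ w := by
  have himage : φ '' K ⊆ Ioi 0 := by
    rw [← interior_Ici]
    exact interior_maximal (image_subset_iff.2 hφ) (φ.isOpenMap_of_ne_zero hφ0 K hK)
  exact himage (mem_image_of_mem φ hw)

lemma nonneg_of_mem_closure_of_nonneg {φ : E →L[ℝ] ℝ} (hφ : ∀ w ∈ K, 0 ≤ φ w) {v : E}
    (hv : v ∈ closure K) : 0 ≤ φ v :=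
  le_on_closure hφ continuousOn_const φ.continuous.continuousOn hv

end Cone

section Separation

variable {E : Type*} [NormedAddCommGroup E] [NormedSpace ℝ E] {K : Set E}

lemma exists_supporting_of_mem_closure_of_notMem (hK : IsOpen K) (hconv : Convex ℝ K)
    (hcone : ∀ v ∈ K, ∀ t : ℝ, 0 < t → t • v ∈ K) {x : E} (hx : x ∈ closure K) (hxK : x ∉ K) :
    ∃ φ : E →L[ℝ] ℝ, φ x = 0 ∧ ∀ w ∈ K, 0 < φ w := by
  obtain ⟨f, hf⟩ := geometric_hahn_banach_point_open hconv hK hxK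
  have hnonneg : ∀ a ∈ K, 0 ≤ f a := fun a ha => by
    simpa using nonpos_of_forall_lt_of_cone hcone (f := -f) (fun b hb => neg_lt_neg (hf b hb)) ha
  have h0 : (0 : E) ∈ closure K := zero_mem_closure_of_cone hcone (closure_nonempty_iff.1 ⟨x, hx⟩)
  have hfx_le : f x ≤ f 0 := le_on_closure (f := fun _ => f x) (fun b hb => (hf b hb).le)
    continuousOn_const f.continuous.continuousOn h0
  have hfx : f x = 0 :=
    le_antisymm (by simpa using hfx_le) (nonneg_of_mem_closure_of_nonneg hnonneg hx)
  exact ⟨f, hfx, fun w hw => by rw [← hfx]; exact hf w hw⟩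

lemma exists_nonneg_pos_of_neg_notMem (hKc : IsClosed K) (hconv : Convex ℝ K)
    (hcone : ∀ v ∈ K, ∀ t : ℝ, 0 < t → t • v ∈ K) (h0 : (0 : E) ∈ K) {v : E} (hv : -v ∉ K) :
    ∃ f : E →L[ℝ] ℝ, (∀ a ∈ K, 0 ≤ f a) ∧ 0 < f v := by
  obtain ⟨f, u, hfv, hfK⟩ := geometric_hahn_banach_point_closed hconv hKc hv
  have hu : u < 0 := by simpa using hfK 0 h0
  refine ⟨f, fun a ha => ?_, by linarith [map_neg f v]⟩
  simpa using nonpos_of_forall_lt_of_cone hcone (f := -f) (fun b hb => neg_lt_neg (hfK b hb)) ha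

lemma exists_forall_pos_of_salient [ProperSpace E] (hKc : IsClosed K) (hconv : Convex ℝ K)
    (hcone : ∀ v ∈ K, ∀ t : ℝ, 0 < t → t • v ∈ K) (hsal : K ∩ -K ⊆ {0}) :
    ∃ φ : E →L[ℝ] ℝ, ∀ v ∈ K, v ≠ 0 → 0 < φ v := by
  set S := Metric.sphere (0 : E) 1 ∩ K
  have hsep : ∀ v ∈ S, ∃ f : E →L[ℝ] ℝ, (∀ a ∈ K, 0 ≤ f a) ∧ 0 < f v := by
    rintro v ⟨hv1, hvK⟩
    have hv0 : v ≠ 0 := ne_zero_of_mem_unit_sphere ⟨v, hv1⟩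
    have h0 : (0 : E) ∈ K := hKc.closure_eq ▸ zero_mem_closure_of_cone hcone ⟨v, hvK⟩
    exact exists_nonneg_pos_of_neg_notMem hKc hconv hcone h0 fun h => hv0 (hsal ⟨hvK, h⟩)
  choose! f hfK hfv using hsep
  obtain ⟨t, ht⟩ := ((isCompact_sphere 0 1).inter_right hKc).elim_finite_subcover
    (fun v : S => {w | 0 < f v w}) (fun v => isOpen_lt continuous_const (f v).continuous)
    fun w hw => mem_iUnion.2 ⟨⟨w, hw⟩, hfv w hw⟩
  refine ⟨∑ v ∈ t, f v, fun v hvK hv0 => ?_⟩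
  have hu : ‖v‖⁻¹ • v ∈ S :=
    ⟨by simp [norm_smul, hv0], hcone v hvK _ (inv_pos.2 (norm_pos_iff.2 hv0))⟩
  obtain ⟨i, hi, hiu⟩ := mem_iUnion₂.1 (ht hu)
  have hpos : 0 < (∑ v ∈ t, f v) (‖v‖⁻¹ • v) := by
    rw [sum_apply]
    exact Finset.sum_pos' (fun j _ => hfK j j.2 _ hu.2) ⟨i, hi, hiu⟩
  rw [map_smul, smul_eq_mul] at hpos
  exact pos_of_mul_pos_right hpos (inv_nonneg.2 (norm_nonneg v))

end Separation

lemma IsStrictlyConvexCone.exists_eq_smul_of_map_eq_zero {W : Type*} [AddCommGroup W]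
    [Module ℝ W] [TopologicalSpace W] {K : Set W} (hK : IsStrictlyConvexCone K) {x y : W}
    (hx : x ∈ frontier K) (hy : y ∈ frontier K) (hx0 : x ≠ 0) (hy0 : y ≠ 0) {ℓ : W →ₗ[ℝ] ℝ}
    (hℓ : ∀ w ∈ K, 0 < ℓ w) (hℓx : ℓ x = 0) (hℓy : ℓ y = 0) : ∃ t : ℝ, y = t • x := by
  by_contra! hnp
  have hmid := hK x hx y hy hx0 hy0 hnp ⟨1 / 2, 1 / 2, by norm_num, by norm_num, by norm_num, rfl⟩
  simpa [hℓx, hℓy] using hℓ _ hmid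

section DualCone

variable {C : Set (EuclideanSpace ℝ (Fin (n + 1)))}

lemma dualConeSet_nonempty (hconv : Convex ℝ C)
    (hcone : ∀ v ∈ C, ∀ t : ℝ, 0 < t → t • v ∈ C) (hproper : closure C ∩ -closure C ⊆ {0}) :
    (dualConeSet C).Nonempty :=
  exists_forall_pos_of_salient isClosed_closure hconv.closure
    (fun _ hv _ ht => smul_mem_closure_of_cone hcone ht hv) hproper

lemma nonneg_of_mem_closure_dualConeSet {φ : EuclideanSpace ℝ (Fin (n + 1)) →L[ℝ] ℝ}
    (hφ : φ ∈ closure (dualConeSet C)) {v : EuclideanSpace ℝ (Fin (n + 1))}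
    (hv : v ∈ closure C) : 0 ≤ φ v := by
  rcases eq_or_ne v 0 with rfl | hv0
  · simp
  exact le_on_closure (fun ψ hψ => (hψ v hv hv0).le) continuousOn_const
    (continuous_eval_const v).continuousOn hφ

lemma mem_closure_dualConeSet (hD : (dualConeSet C).Nonempty)
    {φ : EuclideanSpace ℝ (Fin (n + 1)) →L[ℝ] ℝ} (hφ : ∀ v ∈ closure C, 0 ≤ φ v) :
    φ ∈ closure (dualConeSet C) := by
  obtain ⟨φ₀, hφ₀⟩ := hD
  have hlim : Filter.Tendsto (fun t : ℝ => φ + t • φ₀) (nhdsWithin 0 (Ioi 0)) (nhds φ) := by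
    simpa using (((continuous_id.smul continuous_const).const_add φ).tendsto (0 : ℝ)).mono_left
      (nhdsWithin_le_nhds (s := Ioi 0))
  refine mem_closure_of_tendsto hlim (eventually_nhdsWithin_of_forall fun t ht v hv hv0 => ?_)
  simpa using add_pos_of_nonneg_of_pos (hφ v hv) (mul_pos ht (hφ₀ v hv hv0))

lemma pos_of_mem_frontier_dualConeSet (hopen : IsOpen C)
    {φ : EuclideanSpace ℝ (Fin (n + 1)) →L[ℝ] ℝ} (hφ : φ ∈ frontier (dualConeSet C))
    (hφ0 : φ ≠ 0) {w : EuclideanSpace ℝ (Fin (n + 1))} (hw : w ∈ C) : 0 < φ w :=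
  pos_of_nonneg_of_isOpen hopen hφ0
    (fun _ hu => nonneg_of_mem_closure_dualConeSet hφ.1 (subset_closure hu)) hw

lemma mem_frontier_dualConeSet (hD : (dualConeSet C).Nonempty)
    {φ : EuclideanSpace ℝ (Fin (n + 1)) →L[ℝ] ℝ} (hφ : ∀ w ∈ C, 0 < φ w)
    {x : EuclideanSpace ℝ (Fin (n + 1))} (hx : x ∈ closure C) (hx0 : x ≠ 0) (hφx : φ x = 0) :
    φ ∈ frontier (dualConeSet C) :=
  ⟨mem_closure_dualConeSet hD fun _ =>
      nonneg_of_mem_closure_of_nonneg fun w hw => (hφ w hw).le,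
    fun hint => (interior_subset hint x hx hx0).ne' hφx⟩

lemma mem_closure_of_forall_dualConeSet_pos (hne : C.Nonempty) (hconv : Convex ℝ C)
    (hcone : ∀ v ∈ C, ∀ t : ℝ, 0 < t → t • v ∈ C) (hD : (dualConeSet C).Nonempty)
    {v : EuclideanSpace ℝ (Fin (n + 1))} (hv : ∀ ψ ∈ dualConeSet C, 0 < ψ v) :
    v ∈ closure C := by
  by_contra hvC
  obtain ⟨g, u, hgC, hgv⟩ := geometric_hahn_banach_closed_point hconv.closure isClosed_closure hvC
  have hu : 0 < u := by simpa using hgC 0 (zero_mem_closure_of_cone hcone hne)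
  have hg : -g ∈ closure (dualConeSet C) := mem_closure_dualConeSet hD fun a ha => by
    simpa using nonpos_of_forall_lt_of_cone (fun _ hb _ ht => smul_mem_closure_of_cone hcone ht hb)
      hgC ha
  have hgv' : 0 ≤ (-g) v := le_on_closure (fun ψ hψ => (hv ψ hψ).le) continuousOn_const
    (continuous_eval_const v).continuousOn hg
  simp only [neg_apply] at hgv'
  linarith

end DualCone

section Duality

variable {C : Set (EuclideanSpace ℝ (Fin (n + 1)))}

lemma HasC1BoundaryCone.isStrictlyConvexCone_dualConeSet (hopen : IsOpen C)
    (hC : HasC1BoundaryCone C) : IsStrictlyConvexCone (dualConeSet C) := by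
  rintro φ hφ ψ hψ hφ0 hψ0 hnp _ ⟨a, b, ha, hb, -, rfl⟩ v hv hv0
  have hφv := nonneg_of_mem_closure_dualConeSet hφ.1 hv
  have hψv := nonneg_of_mem_closure_dualConeSet hψ.1 hv
  simp only [add_apply, smul_apply, smul_eq_mul]
  refine (by positivity : 0 ≤ a * φ v + b * ψ v).lt_of_ne fun hsum => ?_
  have hφv0 : φ v = 0 := by nlinarith
  have hψv0 : ψ v = 0 := by nlinarith
  have hφC : ∀ w ∈ C, 0 < φ w := fun _ => pos_of_mem_frontier_dualConeSet hopen hφ hφ0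
  have hvC : v ∈ frontier C := hopen.frontier_eq ▸ ⟨hv, fun hvC => (hφC v hvC).ne' hφv0⟩
  obtain ⟨c, -, hc⟩ := hC v hvC hv0 φ ψ ⟨hφv0, hφC⟩
    ⟨hψv0, fun _ => pos_of_mem_frontier_dualConeSet hopen hψ hψ0⟩
  exact hnp c hc

lemma IsStrictlyConvexCone.hasC1BoundaryDualCone_dualConeSet (hopen : IsOpen C)
    (hne : C.Nonempty) (hconv : Convex ℝ C) (hcone : ∀ v ∈ C, ∀ t : ℝ, 0 < t → t • v ∈ C)
    (hD : (dualConeSet C).Nonempty) (hC : IsStrictlyConvexCone C) :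
    HasC1BoundaryDualCone (dualConeSet C) := by
  rintro φ hφ hφ0 v w ⟨hφv, hvD⟩ ⟨hφw, hwD⟩
  obtain ⟨φ₀, hφ₀⟩ := hD
  have hφC : ∀ u ∈ C, 0 < φ u := fun _ => pos_of_mem_frontier_dualConeSet hopen hφ hφ0
  have hfrontier : ∀ u, φ u = 0 → (∀ ψ ∈ dualConeSet C, 0 < ψ u) → u ∈ frontier C ∧ u ≠ 0 := by
    intro u hφu huD
    have hu : u ∈ closure C := mem_closure_of_forall_dualConeSet_pos hne hconv hcone ⟨φ₀, hφ₀⟩ huD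
    refine ⟨hopen.frontier_eq ▸ ⟨hu, fun huC => (hφC u huC).ne' hφu⟩, fun hu0 => ?_⟩
    simpa [hu0] using huD φ₀ hφ₀
  obtain ⟨hv, hv0⟩ := hfrontier v hφv hvD
  obtain ⟨hw, hw0⟩ := hfrontier w hφw hwD
  obtain ⟨t, rfl⟩ := hC.exists_eq_smul_of_map_eq_zero hv hw hv0 hw0 (ℓ := φ) hφC hφv hφw
  have hφ₀w := hwD φ₀ hφ₀
  rw [map_smul, smul_eq_mul] at hφ₀w
  exact ⟨t, pos_of_mul_pos_left hφ₀w (hvD φ₀ hφ₀).le, rfl⟩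

lemma IsStrictlyConvexCone.of_hasC1BoundaryDualCone_dualConeSet (hopen : IsOpen C)
    (hconv : Convex ℝ C) (hcone : ∀ v ∈ C, ∀ t : ℝ, 0 < t → t • v ∈ C)
    (hD : (dualConeSet C).Nonempty) (hC : HasC1BoundaryDualCone (dualConeSet C)) :
    IsStrictlyConvexCone C := by
  rintro x hx y hy hx0 hy0 hnp _ ⟨a, b, ha, hb, hab, rfl⟩
  rw [hopen.frontier_eq] at hx hy
  by_contra hz
  have hz0 : a • x + b • y ≠ 0 := fun h => hnp (-(a / b)) <| by
    have hby : b • y = -(a • x) := eq_neg_of_add_eq_zero_right h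
    rw [neg_smul, div_eq_inv_mul, mul_smul, ← smul_neg, ← hby, inv_smul_smul₀ hb.ne']
  obtain ⟨φ, hφz, hφC⟩ := exists_supporting_of_mem_closure_of_notMem hopen hconv hcone
    (hconv.closure hx.1 hy.1 ha.le hb.le hab) hz
  have hφx := nonneg_of_mem_closure_of_nonneg (fun w hw => (hφC w hw).le) hx.1
  have hφy := nonneg_of_mem_closure_of_nonneg (fun w hw => (hφC w hw).le) hy.1
  rw [map_add, map_smul, map_smul, smul_eq_mul, smul_eq_mul] at hφz
  have hφx0 : φ x = 0 := by nlinarith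
  have hφy0 : φ y = 0 := by nlinarith
  have hφ0 : φ ≠ 0 := by
    rintro rfl
    obtain ⟨w, hw⟩ := closure_nonempty_iff.1 ⟨x, hx.1⟩
    simpa using hφC w hw
  obtain ⟨c, -, hc⟩ := hC φ (mem_frontier_dualConeSet hD hφC hx.1 hx0 hφx0) hφ0 x y
    ⟨hφx0, fun ψ hψ => hψ x hx.1 hx0⟩ ⟨hφy0, fun ψ hψ => hψ y hy.1 hy0⟩
  exact hnp c hc

lemma HasC1BoundaryCone.of_isStrictlyConvexCone_dualConeSet (hD : (dualConeSet C).Nonempty)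
    (hC : IsStrictlyConvexCone (dualConeSet C)) : HasC1BoundaryCone C := by
  rintro x hx hx0 φ ψ ⟨hφx, hφC⟩ ⟨hψx, hψC⟩
  obtain ⟨p, hp⟩ := closure_nonempty_iff.1 ⟨x, frontier_subset_closure hx⟩
  have hne_zero : ∀ χ : EuclideanSpace ℝ (Fin (n + 1)) →L[ℝ] ℝ, (∀ w ∈ C, 0 < χ w) → χ ≠ 0 :=
    fun χ hχ h => by simpa [h] using hχ p hp
  obtain ⟨t, rfl⟩ := hC.exists_eq_smul_of_map_eq_zero
    (mem_frontier_dualConeSet hD hφC (frontier_subset_closure hx) hx0 hφx)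
    (mem_frontier_dualConeSet hD hψC (frontier_subset_closure hx) hx0 hψx)
    (hne_zero φ hφC) (hne_zero ψ hψC) (ℓ := ContinuousLinearMap.apply ℝ ℝ x)
    (fun χ hχ => hχ x (frontier_subset_closure hx) hx0) hφx hψx
  have hψp := hψC p hp
  rw [smul_apply, smul_eq_mul] at hψp
  exact ⟨t, pos_of_mul_pos_left hψp (hφC p hp).le, rfl⟩

end Duality

/-- If `Ω` and `Ω*` are dual properly convex open domains in `RP^n` (given by a properly
convex open cone `C ⊆ ℝ^{n+1}` and its dual cone `C*`), then `Ω` is strictly convex with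
`C¹` boundary if and only if `Ω*` is strictly convex with `C¹` boundary. -/
theorem dual_strictly_convex_C1_iff (C : Set (EuclideanSpace ℝ (Fin (n + 1))))
    (hopen : IsOpen C) (hne : C.Nonempty) (hconv : Convex ℝ C)
    (hcone : ∀ v ∈ C, ∀ t : ℝ, 0 < t → t • v ∈ C)
    (hproper : closure C ∩ -closure C ⊆ {0}) :
    (IsStrictlyConvexCone C ∧ HasC1BoundaryCone C) ↔
    (IsStrictlyConvexCone (dualConeSet C) ∧ HasC1BoundaryDualCone (dualConeSet C)) := by
  have hD := dualConeSet_nonempty hconv hcone hproper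
  constructor
  · rintro ⟨hstrict, hC1⟩
    exact ⟨hC1.isStrictlyConvexCone_dualConeSet hopen,
      hstrict.hasC1BoundaryDualCone_dualConeSet hopen hne hconv hcone hD⟩
  · rintro ⟨hstrict, hC1⟩
    exact ⟨.of_hasC1BoundaryDualCone_dualConeSet hopen hconv hcone hD hC1,
      .of_isStrictlyConvexCone_dualConeSet hD hstrict⟩
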